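/- Upper bound for the Fourier spectrum of a product measure: for θ ∈ (0,1], finite Borel measures μ on ℝ^k and ν on ℝ^{d-k}, one has dim_F^θ (μ × ν) ≤ min{ kθ + dim_F^θ ν , dim_F^θ μ + (d-k)θ }. -/

import Mathlib

open MeasureTheory Metric Set
open scoped ENNReal NNReal Real

noncomputable section

abbrev Eℝ (n : ℕ) := EuclideanSpace ℝ (Fin n)

/-- The Fourier transform of a measure on ℝⁿ. -/
def ftm {n : ℕ} (μ : Measure (Eℝ n)) (z : Eℝ n) : ℂ :=
  ∫ x, Complex.exp (-(2 * Real.pi * (inner ℝ z x : ℝ)) * Complex.I) ∂μ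

/-- The (topological) support of `μ` is contained in `X`. -/
def SptIn {n : ℕ} (μ : Measure (Eℝ n)) (X : Set (Eℝ n)) : Prop :=
  ∀ U : Set (Eℝ n), IsOpen U → Disjoint U X → μ U = 0

/-- Fourier dimension of a measure (valued in ℝ≥0∞). -/
def fDim {n : ℕ} (μ : Measure (Eℝ n)) : ℝ≥0∞ :=
  ⨆ s ∈ {s : ℝ | 0 ≤ s ∧ ∃ C > 0, ∀ z : Eℝ n, z ≠ 0 → ‖ftm μ z‖ ≤ C * ‖z‖ ^ (-(s / 2))},
    ENNReal.ofReal s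

/-- Finiteness of the energy J_{s,θ}(μ). -/
def Jfin (n : ℕ) (μ : Measure (Eℝ n)) (s θ : ℝ) : Prop :=
  (∫⁻ z : Eℝ n, ENNReal.ofReal (‖ftm μ z‖ ^ (2 / θ) * ‖z‖ ^ (s / θ - (n : ℝ)))) < ∞

/-- The Fourier spectrum of a measure at θ. -/
def fSpec (n : ℕ) (μ : Measure (Eℝ n)) (θ : ℝ) : ℝ≥0∞ :=
  if θ = 0 then fDim μ
  else ⨆ s ∈ {s : ℝ | 0 ≤ s ∧ Jfin n μ s θ}, ENNReal.ofReal s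

/-- The Fourier spectrum of a set at θ. -/
def fSpecSet (n : ℕ) (X : Set (Eℝ n)) (θ : ℝ) : ℝ≥0∞ :=
  ⨆ μ ∈ {μ : Measure (Eℝ n) | μ ≠ 0 ∧ IsFiniteMeasure μ ∧ SptIn μ X},
    min (fSpec n μ θ) (n : ℝ≥0∞)

/-- The extended Fourier spectrum of a set at θ. -/
def eFSpecSet (n : ℕ) (X : Set (Eℝ n)) (θ : ℝ) : ℝ≥0∞ :=
  ⨆ μ ∈ {μ : Measure (Eℝ n) | μ ≠ 0 ∧ IsFiniteMeasure μ ∧ SptIn μ X}, fSpec n μ θ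

/-- Fourier dimension of a set. -/
def fDimSet (n : ℕ) (X : Set (Eℝ n)) : ℝ≥0∞ := fSpecSet n X 0

/-- Extended Fourier dimension of a set. -/
def eFDimSet (n : ℕ) (X : Set (Eℝ n)) : ℝ≥0∞ := eFSpecSet n X 0

/-- Identification of ℝᵏ × ℝᵐ with ℝ^{k+m}. -/
def prodMap (k m : ℕ) (p : Eℝ k × Eℝ m) : Eℝ (k + m) :=
  WithLp.toLp 2 ((fun i => Fin.addCases (fun j => p.1 j) (fun j => p.2 j) i) : Fin (k + m) → ℝ)

/-- The product measure μ × ν, viewed as a measure on ℝ^{k+m}. -/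
def mprod {k m : ℕ} (μ : Measure (Eℝ k)) (ν : Measure (Eℝ m)) : Measure (Eℝ (k + m)) :=
  (μ.prod ν).map (prodMap k m)

/-- The unit cube [0,1]ⁿ. -/
def cube (n : ℕ) : Set (Eℝ n) := {x | ∀ i, x i ∈ Set.Icc (0 : ℝ) 1}


section KEYSTUFF
variable {a b : ℕ}

lemma norm_prodMap_sq (k m : ℕ) (p : Eℝ k × Eℝ m) :
    ‖prodMap k m p‖ ^ 2 = ‖p.1‖ ^ 2 + ‖p.2‖ ^ 2 := by
  simp only [EuclideanSpace.norm_eq]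
  rw [Real.sq_sqrt (by positivity), Real.sq_sqrt (by positivity), Real.sq_sqrt (by positivity)]
  rw [Fin.sum_univ_add]
  simp [prodMap]

lemma norm_prodMap_le (k m : ℕ) (p : Eℝ k × Eℝ m) :
    ‖prodMap k m p‖ ≤ ‖p.1‖ + ‖p.2‖ := by
  nlinarith [norm_prodMap_sq k m p, norm_nonneg p.1, norm_nonneg p.2,
    norm_nonneg (prodMap k m p)]

lemma fst_norm_le (k m : ℕ) (p : Eℝ k × Eℝ m) : ‖p.1‖ ≤ ‖prodMap k m p‖ := by
  nlinarith [norm_prodMap_sq k m p, norm_nonneg p.1, norm_nonneg p.2,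
    norm_nonneg (prodMap k m p)]

lemma snd_norm_le (k m : ℕ) (p : Eℝ k × Eℝ m) : ‖p.2‖ ≤ ‖prodMap k m p‖ := by
  nlinarith [norm_prodMap_sq k m p, norm_nonneg p.1, norm_nonneg p.2,
    norm_nonneg (prodMap k m p)]

lemma norm_prodMap_swap (k m : ℕ) (x : Eℝ k) (y : Eℝ m) :
    ‖prodMap k m (x, y)‖ = ‖prodMap m k (y, x)‖ := by
  rw [show ‖prodMap k m (x, y)‖ = Real.sqrt (‖prodMap k m (x, y)‖ ^ 2) from
      (Real.sqrt_sq (norm_nonneg _)).symm,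
    show ‖prodMap m k (y, x)‖ = Real.sqrt (‖prodMap m k (y, x)‖ ^ 2) from
      (Real.sqrt_sq (norm_nonneg _)).symm,
    norm_prodMap_sq, norm_prodMap_sq]
  ring_nf

lemma inner_prodMap (k m : ℕ) (z x : Eℝ k × Eℝ m) :
    (inner ℝ (prodMap k m z) (prodMap k m x) : ℝ) = inner ℝ z.1 x.1 + inner ℝ z.2 x.2 := by
  simp only [PiLp.inner_apply, RCLike.inner_apply, starRingEnd_apply, star_trivial]
  rw [Fin.sum_univ_add]
  simp [prodMap]

def prodME (k m : ℕ) : (Eℝ k × Eℝ m) ≃ᵐ Eℝ (k + m) :=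
  (((MeasurableEquiv.toLp 2 (Fin k → ℝ)).symm.prodCongr (MeasurableEquiv.toLp 2 (Fin m → ℝ)).symm).trans
    (MeasurableEquiv.sumPiEquivProdPi (fun _ : Fin k ⊕ Fin m => ℝ)).symm).trans
    ((MeasurableEquiv.piCongrLeft (fun _ : Fin (k+m) => ℝ) finSumFinEquiv).trans
      (MeasurableEquiv.toLp 2 (Fin (k+m) → ℝ)).symm.symm)

lemma prodME_eq (k m : ℕ) : ⇑(prodME k m) = prodMap k m := by
  funext p; ext i
  show (MeasurableEquiv.piCongrLeft (fun _ : Fin (k+m) => ℝ) finSumFinEquiv)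
      (fun t => Sum.rec (motive := fun _ => ℝ) (fun j => p.1 j) (fun j => p.2 j) t) i = _
  rw [MeasurableEquiv.coe_piCongrLeft]
  induction i using Fin.addCases with
  | left j =>
    rw [show Fin.castAdd m j = finSumFinEquiv (Sum.inl j) from rfl,
      Equiv.piCongrLeft_apply_apply]
    simp [prodMap]
  | right j =>
    rw [show Fin.natAdd k j = finSumFinEquiv (Sum.inr j) from rfl,
      Equiv.piCongrLeft_apply_apply]
    simp [prodMap]

lemma measurable_prodMap (k m : ℕ) : Measurable (prodMap k m) := by
  rw [← prodME_eq]; exact (prodME k m).measurable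

lemma prodMap_mp (k m : ℕ) :
    MeasurePreserving (prodMap k m) ((volume : Measure (Eℝ k)).prod volume) volume := by
  rw [← prodME_eq]
  have h1 := (EuclideanSpace.volume_preserving_symm_measurableEquiv_toLp (Fin k)).prod
    (EuclideanSpace.volume_preserving_symm_measurableEquiv_toLp (Fin m))
  have h2 := measurePreserving_sumPiEquivProdPi_symm
    (fun _ : Fin k ⊕ Fin m => (volume : Measure ℝ))
  have h3 := volume_measurePreserving_piCongrLeft (fun _ : Fin (k+m) => ℝ) finSumFinEquiv
  have h4 := (EuclideanSpace.volume_preserving_symm_measurableEquiv_toLp (Fin (k+m))).symm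
  exact ((h1.trans h2).trans (h3.trans h4))

lemma norm_exp_I (r : ℝ) : ‖Complex.exp ((r:ℂ) * Complex.I)‖ = 1 := by
  simp [Complex.norm_exp]

lemma ftm_integrand_eq {n : ℕ} (z x : Eℝ n) :
    Complex.exp (-(2 * Real.pi * (inner ℝ z x : ℝ)) * Complex.I)
      = Complex.exp (((-(2 * Real.pi * (inner ℝ z x : ℝ)) : ℝ) : ℂ) * Complex.I) := by
  push_cast; ring_nf

lemma cont_aux1 {n : ℕ} (x : Eℝ n) :
    Continuous fun z : Eℝ n => Complex.exp (-(2 * Real.pi * (inner ℝ z x : ℝ)) * Complex.I) := by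
  apply Complex.continuous_exp.comp
  have h2 : Continuous fun z : Eℝ n => ((inner ℝ z x : ℝ) : ℂ) :=
    Complex.continuous_ofReal.comp (Continuous.inner continuous_id continuous_const)
  exact ((continuous_const.mul h2).neg).mul continuous_const

lemma cont_aux2 {n : ℕ} (z : Eℝ n) :
    Continuous fun x : Eℝ n => Complex.exp (-(2 * Real.pi * (inner ℝ z x : ℝ)) * Complex.I) := by
  apply Complex.continuous_exp.comp
  have h2 : Continuous fun x : Eℝ n => ((inner ℝ z x : ℝ) : ℂ) :=
    Complex.continuous_ofReal.comp (Continuous.inner continuous_const continuous_id)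
  exact ((continuous_const.mul h2).neg).mul continuous_const

lemma continuous_ftm {n : ℕ} (μ : Measure (Eℝ n)) [IsFiniteMeasure μ] :
    Continuous (ftm μ) := by
  apply continuous_of_dominated (bound := fun _ => 1)
  · intro z
    exact (cont_aux2 z).aestronglyMeasurable
  · intro z
    filter_upwards with x
    rw [ftm_integrand_eq, norm_exp_I]
  · exact integrable_const 1
  · filter_upwards with x
    exact cont_aux1 x

lemma norm_ftm_le {n : ℕ} (μ : Measure (Eℝ n)) [IsFiniteMeasure μ] (z : Eℝ n) :
    ‖ftm μ z‖ ≤ (μ univ).toReal := by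
  calc ‖ftm μ z‖ ≤ ∫ x, ‖Complex.exp (-(2 * Real.pi * (inner ℝ z x : ℝ)) * Complex.I)‖ ∂μ :=
        norm_integral_le_integral_norm _
    _ = ∫ _x, (1:ℝ) ∂μ := by
        congr 1; funext x; rw [ftm_integrand_eq, norm_exp_I]
    _ = (μ univ).toReal := by simp [Measure.real]

lemma ftm_zero_norm {n : ℕ} (μ : Measure (Eℝ n)) [IsFiniteMeasure μ] :
    ‖ftm μ 0‖ = (μ univ).toReal := by
  have : ftm μ 0 = ((μ univ).toReal : ℂ) := by
    unfold ftm
    simp [Measure.real]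
  rw [this]
  simp [abs_of_nonneg ENNReal.toReal_nonneg]

lemma ftm_mprod {k m : ℕ} (μ : Measure (Eℝ k)) (ν : Measure (Eℝ m))
    [IsFiniteMeasure μ] [IsFiniteMeasure ν] (p : Eℝ k × Eℝ m) :
    ftm (mprod μ ν) (prodMap k m p) = ftm μ p.1 * ftm ν p.2 := by
  unfold ftm mprod
  rw [integral_map (measurable_prodMap k m).aemeasurable (cont_aux2 _).aestronglyMeasurable]
  have key : ∀ q : Eℝ k × Eℝ m,
      Complex.exp (-(2 * Real.pi * (inner ℝ (prodMap k m p) (prodMap k m q) : ℝ)) * Complex.I)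
      = Complex.exp (-(2 * Real.pi * (inner ℝ p.1 q.1 : ℝ)) * Complex.I)
        * Complex.exp (-(2 * Real.pi * (inner ℝ p.2 q.2 : ℝ)) * Complex.I) := by
    intro q
    rw [← Complex.exp_add, inner_prodMap]
    push_cast; ring_nf
  simp_rw [key]
  exact integral_prod_mul (μ := μ) (ν := ν)
    (fun x => Complex.exp (-(2 * Real.pi * (inner ℝ p.1 x : ℝ)) * Complex.I))
    (fun y => Complex.exp (-(2 * Real.pi * (inner ℝ p.2 y : ℝ)) * Complex.I))

lemma lintegral_ball_rpow_lt_top {b : ℕ} (hb : 1 ≤ b) {e r : ℝ} (he : -(b:ℝ) < e) (hr : 0 < r) :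
    ∫⁻ y in ball (0:Eℝ b) r, ENNReal.ofReal (‖y‖ ^ e) < ∞ := by
  rcases le_or_gt 0 e with hepos | heneg
  · calc ∫⁻ y in ball (0:Eℝ b) r, ENNReal.ofReal (‖y‖ ^ e)
        ≤ ∫⁻ _y in ball (0:Eℝ b) r, ENNReal.ofReal (r ^ e) := by
          apply setLIntegral_mono' measurableSet_ball
          intro y hy
          apply ENNReal.ofReal_le_ofReal
          exact Real.rpow_le_rpow (norm_nonneg y)
            (le_of_lt (by simpa using mem_ball_iff_norm.mp hy)) hepos
      _ = ENNReal.ofReal (r ^ e) * volume (ball (0:Eℝ b) r) := setLIntegral_const _ _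
      _ < ∞ := ENNReal.mul_lt_top ENNReal.ofReal_lt_top measure_ball_lt_top
  · classical
    haveI : Nonempty (Fin b) := ⟨⟨0, hb⟩⟩
    haveI : Nontrivial (Eℝ b) := inferInstance
    set A : ℕ → Set (Eℝ b) := fun j => ball 0 (r / 2 ^ j) \ ball 0 (r / 2 ^ (j+1)) with hA
    have hsub : ball (0:Eℝ b) r ⊆ {0} ∪ ⋃ j, A j := by
      intro y hy
      rcases eq_or_ne y 0 with rfl | hy0
      · exact Or.inl rfl
      · right
        have hny : 0 < ‖y‖ := norm_pos_iff.mpr hy0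
        have hyr : ‖y‖ < r := by simpa using mem_ball_iff_norm.mp hy
        have hex : ∃ j, r / 2 ^ (j+1) ≤ ‖y‖ := by
          obtain ⟨j, hj⟩ := exists_pow_lt_of_lt_one (div_pos hny hr) (by norm_num : (1:ℝ)/2 < 1)
          refine ⟨j, ?_⟩
          rw [div_pow, one_pow, div_lt_div_iff₀ (by positivity) hr] at hj
          rw [div_le_iff₀ (by positivity)]
          have h2 : (2:ℝ) ^ j ≤ 2 ^ (j+1) := by
            apply pow_le_pow_right₀ (by norm_num) (Nat.le_succ j)
          nlinarith [hny.le]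
        obtain ⟨j, hj1, hjmin⟩ : ∃ j, (r / 2 ^ (j+1) ≤ ‖y‖) ∧
            ∀ i < j, ¬ (r / 2 ^ (i+1) ≤ ‖y‖) :=
          ⟨Nat.find hex, Nat.find_spec hex, fun i hi => Nat.find_min hex hi⟩
        have hj2 : ‖y‖ < r / 2 ^ j := by
          cases' Nat.eq_zero_or_pos j with h0 hpos
          · rw [h0]; simpa using hyr
          · obtain ⟨i, rfl⟩ := Nat.exists_eq_succ_of_ne_zero hpos.ne'
            have := hjmin i (Nat.lt_succ_self i)
            push_neg at this
            exact this
        refine mem_iUnion.mpr ⟨j, ?_, ?_⟩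
        · exact mem_ball_iff_norm.mpr (by simpa using hj2)
        · intro hmem
          exact absurd (by simpa using mem_ball_iff_norm.mp hmem) (not_lt.mpr hj1)
    have hzero : ∫⁻ y in ({0} : Set (Eℝ b)), ENNReal.ofReal (‖y‖ ^ e) = 0 := by
      rw [lintegral_singleton]
      simp [Real.zero_rpow heneg.ne]
    set V : ℝ≥0∞ := volume (ball (0:Eℝ b) 1) with hV
    have hVfin : V < ∞ := measure_ball_lt_top
    set q : ℝ := (2:ℝ) ^ (-(e + (b:ℝ))) with hq
    have hq0 : 0 < q := Real.rpow_pos_of_pos (by norm_num) _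
    have hq1 : q < 1 := Real.rpow_lt_one_of_one_lt_of_neg (by norm_num) (by linarith)
    set C : ℝ := (r / 2) ^ e * r ^ (b:ℕ) with hC
    have hqsplit : q = (2:ℝ) ^ (-e) * ((2:ℝ) ^ (b:ℕ))⁻¹ := by
      rw [hq, ← Real.rpow_natCast (2:ℝ) b, ← Real.rpow_neg (by norm_num),
        ← Real.rpow_add (by norm_num)]
      ring_nf
    have hterm : ∀ j : ℕ, (r / 2 ^ (j+1)) ^ e * (r / 2 ^ j) ^ (b:ℕ) = C * q ^ j := by
      intro j
      induction j with
      | zero => simp [hC]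
      | succ i ih =>
        have hrp : (r / 2 ^ (i+1+1)) ^ e = (r / 2 ^ (i+1)) ^ e * ((2:ℝ) ^ (-e)) := by
          rw [show r / 2 ^ (i+1+1) = (r / 2 ^ (i+1)) / 2 by ring,
            Real.div_rpow (by positivity) (by norm_num), Real.rpow_neg (by norm_num)]
          ring
        have hnp : (r / 2 ^ (i+1)) ^ (b:ℕ) = (r / 2 ^ i) ^ (b:ℕ) * ((2:ℝ) ^ (b:ℕ))⁻¹ := by
          rw [show r / 2 ^ (i+1) = (r / 2 ^ i) / 2 by ring, div_pow, div_eq_mul_inv]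
        calc (r / 2 ^ (i+1+1)) ^ e * (r / 2 ^ (i+1)) ^ (b:ℕ)
            = ((r / 2 ^ (i+1)) ^ e * (r / 2 ^ i) ^ (b:ℕ)) * ((2:ℝ) ^ (-e) * ((2:ℝ) ^ (b:ℕ))⁻¹) := by
              rw [hrp, hnp]; ring
          _ = (C * q ^ i) * q := by rw [ih, ← hqsplit]
          _ = C * q ^ (i+1) := by ring
    have hAj : ∀ j : ℕ, ∫⁻ y in A j, ENNReal.ofReal (‖y‖ ^ e)
        ≤ ENNReal.ofReal (C * q ^ j) * V := by
      intro j
      have hmeas : MeasurableSet (A j) := measurableSet_ball.diff measurableSet_ball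
      calc ∫⁻ y in A j, ENNReal.ofReal (‖y‖ ^ e)
          ≤ ∫⁻ _y in A j, ENNReal.ofReal ((r / 2 ^ (j+1)) ^ e) := by
            apply setLIntegral_mono' hmeas
            intro y hy
            apply ENNReal.ofReal_le_ofReal
            have hylb : r / 2 ^ (j+1) ≤ ‖y‖ := by
              by_contra hcon
              push_neg at hcon
              exact hy.2 (mem_ball_iff_norm.mpr (by simpa using hcon))
            exact Real.rpow_le_rpow_of_nonpos (by positivity) hylb heneg.le
        _ = ENNReal.ofReal ((r / 2 ^ (j+1)) ^ e) * volume (A j) := setLIntegral_const _ _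
        _ ≤ ENNReal.ofReal ((r / 2 ^ (j+1)) ^ e) * volume (ball (0:Eℝ b) (r / 2 ^ j)) := by
            gcongr
            exact fun y hy => hy.1
        _ = ENNReal.ofReal ((r / 2 ^ (j+1)) ^ e) *
              (ENNReal.ofReal ((r / 2 ^ j) ^ (Module.finrank ℝ (Eℝ b))) * V) := by
            rw [Measure.addHaar_ball volume 0 (by positivity)]
        _ = ENNReal.ofReal (C * q ^ j) * V := by
            rw [finrank_euclideanSpace_fin, ← mul_assoc, ← ENNReal.ofReal_mul (by positivity),
              hterm j]
    calc ∫⁻ y in ball (0:Eℝ b) r, ENNReal.ofReal (‖y‖ ^ e)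
        ≤ ∫⁻ y in ({0} : Set (Eℝ b)) ∪ ⋃ j, A j, ENNReal.ofReal (‖y‖ ^ e) :=
          lintegral_mono_set hsub
      _ ≤ (∫⁻ y in ({0} : Set (Eℝ b)), ENNReal.ofReal (‖y‖ ^ e)) +
            ∫⁻ y in ⋃ j, A j, ENNReal.ofReal (‖y‖ ^ e) := lintegral_union_le _ _ _
      _ ≤ 0 + ∑' j, ∫⁻ y in A j, ENNReal.ofReal (‖y‖ ^ e) := by
          rw [hzero]; gcongr
          exact lintegral_iUnion_le _ _
      _ ≤ ∑' j, ENNReal.ofReal (C * q ^ j) * V := by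
          rw [zero_add]; exact ENNReal.tsum_le_tsum hAj
      _ = (∑' j, ENNReal.ofReal C * (ENNReal.ofReal q) ^ j) * V := by
          rw [ENNReal.tsum_mul_right]
          congr 1
          refine tsum_congr fun j => ?_
          rw [ENNReal.ofReal_mul' (by positivity), ENNReal.ofReal_pow hq0.le]
      _ = ENNReal.ofReal C * (1 - ENNReal.ofReal q)⁻¹ * V := by
          rw [ENNReal.tsum_mul_left, ENNReal.tsum_geometric]
      _ < ∞ := by
          apply ENNReal.mul_lt_top _ hVfin
          apply ENNReal.mul_lt_top ENNReal.ofReal_lt_top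
          rw [ENNReal.inv_lt_top, tsub_pos_iff_lt]
          exact ENNReal.ofReal_lt_one.mpr hq1

lemma measurable_rpow_const {t : ℝ} : Measurable (fun x : ℝ => x ^ t) := by fun_prop

lemma measurable_ftm_norm_rpow {n : ℕ} (μ : Measure (Eℝ n)) [IsFiniteMeasure μ] (t : ℝ) :
    Measurable (fun z : Eℝ n => ‖ftm μ z‖ ^ t) :=
  measurable_rpow_const.comp ((continuous_ftm μ).norm.measurable)

lemma key {a b : ℕ} (hb : 1 ≤ b) (μ : Measure (Eℝ a)) (ν : Measure (Eℝ b))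
    [IsFiniteMeasure μ] [IsFiniteMeasure ν] (hμ : μ ≠ 0) {θ s : ℝ}
    (hθ0 : 0 < θ) (hs : (a:ℝ) * θ < s)
    (hJ : ∫⁻ p : Eℝ a × Eℝ b, ENNReal.ofReal ((‖ftm μ p.1‖ ^ (2/θ) * ‖ftm ν p.2‖ ^ (2/θ)) *
        ‖prodMap a b p‖ ^ (s/θ - ((a:ℝ)+b))) ∂((volume : Measure (Eℝ a)).prod volume) < ∞) :
    Jfin b ν (s - (a:ℝ)*θ) θ := by
  set e : ℝ := s/θ - ((a:ℝ)+b) with he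
  have haθ : (a:ℝ) < s/θ := (lt_div_iff₀ hθ0).mpr (by linarith)
  have hebound : -(b:ℝ) < e := by rw [he]; linarith
  have hexp : (s - (a:ℝ)*θ)/θ - (b:ℝ) = e := by
    rw [he]; field_simp; ring
  -- lower bound for ‖ftm μ‖ near zero
  have hμ0 : 0 < (μ univ).toReal :=
    ENNReal.toReal_pos ((Measure.measure_univ_ne_zero).mpr hμ) (measure_ne_top μ _)
  set c : ℝ := (μ univ).toReal / 2 with hcdef
  have hc : 0 < c := by positivity
  have hcont := (continuous_ftm μ).continuousAt (x := 0)
  rw [Metric.continuousAt_iff] at hcont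
  obtain ⟨r, hr0, hrball⟩ := hcont c hc
  have hlow : ∀ x : Eℝ a, ‖x‖ < r → c ≤ ‖ftm μ x‖ := by
    intro x hx
    have h1 := hrball (x := x) (by simpa [dist_zero_right] using hx)
    rw [dist_eq_norm] at h1
    have h2 := abs_norm_sub_norm_le (ftm μ x) (ftm μ 0)
    rw [ftm_zero_norm] at h2
    rw [abs_le] at h2
    have : (μ univ).toReal = 2 * c := by rw [hcdef]; ring
    linarith [h2.1]
  -- the target integrand
  set H : Eℝ b → ℝ≥0∞ := fun y => ENNReal.ofReal (‖ftm ν y‖ ^ (2/θ) * ‖y‖ ^ e) with hH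
  have hHmeas : Measurable H :=
    ((measurable_ftm_norm_rpow ν (2/θ)).mul (measurable_rpow_const.comp measurable_norm)).ennreal_ofReal
  have hfinal : (∫⁻ y, H y) < ∞ → Jfin b ν (s - (a:ℝ)*θ) θ := by
    intro h
    unfold Jfin
    have : ∀ y : Eℝ b, ENNReal.ofReal (‖ftm ν y‖ ^ (2/θ) * ‖y‖ ^ ((s - (a:ℝ)*θ)/θ - (b:ℝ)))
        = H y := by
      intro y; rw [hexp]
    simpa only [this] using h
  apply hfinal
  rw [← lintegral_add_compl (A := ball (0:Eℝ b) r) H measurableSet_ball]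
  apply ENNReal.add_lt_top.mpr
  constructor
  · -- near part
    set M : ℝ := (ν univ).toReal with hM
    have hM0 : 0 ≤ M := ENNReal.toReal_nonneg
    calc ∫⁻ y in ball (0:Eℝ b) r, H y
        ≤ ∫⁻ y in ball (0:Eℝ b) r, ENNReal.ofReal (M ^ (2/θ)) * ENNReal.ofReal (‖y‖ ^ e) := by
          apply setLIntegral_mono' measurableSet_ball
          intro y _
          rw [hH, ← ENNReal.ofReal_mul (by positivity)]
          apply ENNReal.ofReal_le_ofReal
          apply mul_le_mul_of_nonneg_right _ (Real.rpow_nonneg (norm_nonneg y) e)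
          exact Real.rpow_le_rpow (norm_nonneg _) (norm_ftm_le ν y) (by positivity)
      _ = ENNReal.ofReal (M ^ (2/θ)) * ∫⁻ y in ball (0:Eℝ b) r, ENNReal.ofReal (‖y‖ ^ e) :=
          lintegral_const_mul _ ((measurable_rpow_const.comp measurable_norm).ennreal_ofReal)
      _ < ∞ := ENNReal.mul_lt_top ENNReal.ofReal_lt_top
          (lintegral_ball_rpow_lt_top hb hebound hr0)
  · -- far part
    set D : ℝ := min 1 ((2:ℝ) ^ e) with hD
    have hD0 : 0 < D := lt_min one_pos (Real.rpow_pos_of_pos two_pos e)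
    set K : ℝ≥0∞ := ENNReal.ofReal (c ^ (2/θ) * D) with hK
    have hK0 : K ≠ 0 := by
      rw [hK, Ne, ENNReal.ofReal_eq_zero, not_le]
      positivity
    have hKS0 : K * volume (ball (0:Eℝ a) r) ≠ 0 :=
      mul_ne_zero hK0 (measure_ball_pos volume (0:Eℝ a) hr0).ne'
    -- pointwise bound on S ×ˢ T
    have hpt : ∀ p : Eℝ a × Eℝ b, p ∈ (ball (0:Eℝ a) r) ×ˢ (ball (0:Eℝ b) r)ᶜ →
        K * H p.2 ≤ ENNReal.ofReal ((‖ftm μ p.1‖ ^ (2/θ) * ‖ftm ν p.2‖ ^ (2/θ)) *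
          ‖prodMap a b p‖ ^ e) := by
      rintro ⟨x, y⟩ ⟨hx, hy⟩
      simp only [mem_ball_iff_norm, sub_zero, mem_compl_iff, mem_ball_iff_norm, not_lt] at hx hy
      have hxr : ‖x‖ < r := by simpa using hx
      have hyr : r ≤ ‖y‖ := by simpa using hy
      have hy0 : 0 < ‖y‖ := lt_of_lt_of_le hr0 hyr
      have hn0 : 0 < ‖prodMap a b (x, y)‖ := lt_of_lt_of_le hy0 (snd_norm_le a b (x, y))
      have hDe : D * ‖y‖ ^ e ≤ ‖prodMap a b (x, y)‖ ^ e := by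
        rcases le_or_gt 0 e with hep | hen
        · calc D * ‖y‖ ^ e ≤ 1 * ‖y‖ ^ e := by
                apply mul_le_mul_of_nonneg_right (min_le_left _ _)
                  (Real.rpow_nonneg (norm_nonneg y) e)
            _ = ‖y‖ ^ e := one_mul _
            _ ≤ ‖prodMap a b (x, y)‖ ^ e :=
                Real.rpow_le_rpow (norm_nonneg y) (snd_norm_le a b (x, y)) hep
        · calc D * ‖y‖ ^ e ≤ (2:ℝ) ^ e * ‖y‖ ^ e := by
                apply mul_le_mul_of_nonneg_right (min_le_right _ _)
                  (Real.rpow_nonneg (norm_nonneg y) e)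
            _ = (2 * ‖y‖) ^ e := (Real.mul_rpow (by norm_num) (norm_nonneg y)).symm
            _ ≤ ‖prodMap a b (x, y)‖ ^ e := by
                apply Real.rpow_le_rpow_of_nonpos hn0 _ hen.le
                calc ‖prodMap a b (x, y)‖ ≤ ‖x‖ + ‖y‖ := norm_prodMap_le a b (x, y)
                  _ ≤ 2 * ‖y‖ := by linarith
      have hcx : c ^ (2/θ) ≤ ‖ftm μ x‖ ^ (2/θ) :=
        Real.rpow_le_rpow hc.le (hlow x hxr) (by positivity)
      rw [hK, hH, ← ENNReal.ofReal_mul (by positivity)]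
      apply ENNReal.ofReal_le_ofReal
      calc c ^ (2/θ) * D * (‖ftm ν y‖ ^ (2/θ) * ‖y‖ ^ e)
          = (c ^ (2/θ) * ‖ftm ν y‖ ^ (2/θ)) * (D * ‖y‖ ^ e) := by ring
        _ ≤ (‖ftm μ x‖ ^ (2/θ) * ‖ftm ν y‖ ^ (2/θ)) * (‖prodMap a b (x, y)‖ ^ e) := by
            apply mul_le_mul _ hDe (by positivity) (by positivity)
            exact mul_le_mul_of_nonneg_right hcx (by positivity)
    -- main chain
    have hchain : K * volume (ball (0:Eℝ a) r) * ∫⁻ y in (ball (0:Eℝ b) r)ᶜ, H y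
        ≤ ∫⁻ p : Eℝ a × Eℝ b, ENNReal.ofReal ((‖ftm μ p.1‖ ^ (2/θ) * ‖ftm ν p.2‖ ^ (2/θ)) *
            ‖prodMap a b p‖ ^ e) ∂((volume : Measure (Eℝ a)).prod volume) := by
      have heq : K * volume (ball (0:Eℝ a) r) * ∫⁻ y in (ball (0:Eℝ b) r)ᶜ, H y
          = ∫⁻ p in (ball (0:Eℝ a) r) ×ˢ (ball (0:Eℝ b) r)ᶜ, K * H p.2
              ∂((volume : Measure (Eℝ a)).prod volume) := by
        rw [← Measure.prod_restrict]
        rw [lintegral_prod_mul (f := fun _ : Eℝ a => K) (g := H) aemeasurable_const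
          hHmeas.aemeasurable]
        rw [lintegral_const, Measure.restrict_apply_univ]
      rw [heq]
      calc ∫⁻ p in (ball (0:Eℝ a) r) ×ˢ (ball (0:Eℝ b) r)ᶜ, K * H p.2
            ∂((volume : Measure (Eℝ a)).prod volume)
          ≤ ∫⁻ p in (ball (0:Eℝ a) r) ×ˢ (ball (0:Eℝ b) r)ᶜ,
              ENNReal.ofReal ((‖ftm μ p.1‖ ^ (2/θ) * ‖ftm ν p.2‖ ^ (2/θ)) *
                ‖prodMap a b p‖ ^ e) ∂((volume : Measure (Eℝ a)).prod volume) :=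
            setLIntegral_mono' (measurableSet_ball.prod measurableSet_ball.compl) hpt
        _ ≤ _ := setLIntegral_le_lintegral _ _
    by_contra hcon
    push_neg at hcon
    rw [top_le_iff] at hcon
    rw [hcon, ENNReal.mul_top hKS0] at hchain
    exact absurd (lt_of_le_of_lt hchain hJ) (by simp)

lemma Jfin_transfer {a b : ℕ} (μ : Measure (Eℝ a)) (ν : Measure (Eℝ b))
    [IsFiniteMeasure μ] [IsFiniteMeasure ν] {s θ : ℝ}
    (hJ : Jfin (a+b) (mprod μ ν) s θ) :
    ∫⁻ p : Eℝ a × Eℝ b, ENNReal.ofReal ((‖ftm μ p.1‖ ^ (2/θ) * ‖ftm ν p.2‖ ^ (2/θ)) *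
        ‖prodMap a b p‖ ^ (s/θ - ((a:ℝ)+b))) ∂((volume : Measure (Eℝ a)).prod volume) < ∞ := by
  haveI : IsFiniteMeasure (mprod μ ν) := by
    unfold mprod
    exact Measure.isFiniteMeasure_map _ _
  unfold Jfin at hJ
  have hF : Measurable (fun z : Eℝ (a+b) =>
      ENNReal.ofReal (‖ftm (mprod μ ν) z‖ ^ (2/θ) * ‖z‖ ^ (s/θ - ((a+b : ℕ) : ℝ)))) :=
    ((measurable_ftm_norm_rpow (mprod μ ν) (2/θ)).mul
      (measurable_rpow_const.comp measurable_norm)).ennreal_ofReal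
  rw [← (prodMap_mp a b).lintegral_comp hF] at hJ
  have heq : ∀ p : Eℝ a × Eℝ b,
      ENNReal.ofReal (‖ftm (mprod μ ν) (prodMap a b p)‖ ^ (2/θ) *
        ‖prodMap a b p‖ ^ (s/θ - ((a+b : ℕ) : ℝ)))
      = ENNReal.ofReal ((‖ftm μ p.1‖ ^ (2/θ) * ‖ftm ν p.2‖ ^ (2/θ)) *
        ‖prodMap a b p‖ ^ (s/θ - ((a:ℝ)+b))) := by
    intro p
    rw [ftm_mprod, norm_mul, Real.mul_rpow (norm_nonneg _) (norm_nonneg _)]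
    norm_num
  calc ∫⁻ p : Eℝ a × Eℝ b, ENNReal.ofReal ((‖ftm μ p.1‖ ^ (2/θ) * ‖ftm ν p.2‖ ^ (2/θ)) *
        ‖prodMap a b p‖ ^ (s/θ - ((a:ℝ)+b))) ∂((volume : Measure (Eℝ a)).prod volume)
      = ∫⁻ p : Eℝ a × Eℝ b, ENNReal.ofReal (‖ftm (mprod μ ν) (prodMap a b p)‖ ^ (2/θ) *
          ‖prodMap a b p‖ ^ (s/θ - ((a+b : ℕ) : ℝ))) ∂((volume : Measure (Eℝ a)).prod volume) :=
        lintegral_congr fun p => (heq p).symm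
    _ < ∞ := hJ

lemma Jfin_transfer_swap {a b : ℕ} (μ : Measure (Eℝ a)) (ν : Measure (Eℝ b))
    [IsFiniteMeasure μ] [IsFiniteMeasure ν] {s θ : ℝ}
    (hJ : Jfin (a+b) (mprod μ ν) s θ) :
    ∫⁻ p : Eℝ b × Eℝ a, ENNReal.ofReal ((‖ftm ν p.1‖ ^ (2/θ) * ‖ftm μ p.2‖ ^ (2/θ)) *
        ‖prodMap b a p‖ ^ (s/θ - ((b:ℝ)+a))) ∂((volume : Measure (Eℝ b)).prod volume) < ∞ := by
  have h := Jfin_transfer μ ν hJ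
  rw [← lintegral_prod_swap] at h
  have heq : ∀ p : Eℝ b × Eℝ a,
      ENNReal.ofReal ((‖ftm μ p.swap.1‖ ^ (2/θ) * ‖ftm ν p.swap.2‖ ^ (2/θ)) *
        ‖prodMap a b p.swap‖ ^ (s/θ - ((a:ℝ)+b)))
      = ENNReal.ofReal ((‖ftm ν p.1‖ ^ (2/θ) * ‖ftm μ p.2‖ ^ (2/θ)) *
        ‖prodMap b a p‖ ^ (s/θ - ((b:ℝ)+a))) := by
    rintro ⟨y, x⟩
    simp only [Prod.swap]
    rw [show prodMap a b (x, y) = prodMap a b ((x, y).1, (x, y).2) from rfl]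
    rw [norm_prodMap_swap a b x y]
    rw [show (a:ℝ) + b = (b:ℝ) + a by ring]
    ring_nf
  calc (∫⁻ p : Eℝ b × Eℝ a, ENNReal.ofReal ((‖ftm ν p.1‖ ^ (2/θ) * ‖ftm μ p.2‖ ^ (2/θ)) *
        ‖prodMap b a p‖ ^ (s/θ - ((b:ℝ)+a))) ∂((volume : Measure (Eℝ b)).prod volume))
      = ∫⁻ p : Eℝ b × Eℝ a, ENNReal.ofReal ((‖ftm μ p.swap.1‖ ^ (2/θ) * ‖ftm ν p.swap.2‖ ^ (2/θ)) *
          ‖prodMap a b p.swap‖ ^ (s/θ - ((a:ℝ)+b))) ∂((volume : Measure (Eℝ b)).prod volume) :=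
        lintegral_congr fun p => (heq p).symm
    _ < ∞ := h

end KEYSTUFF

/-- upper bound for the Fourier spectrum of a product measure.
Here `m` plays the role of `d - k`. -/
theorem stmt3 (k m : ℕ) (hk : 1 ≤ k) (hm : 1 ≤ m)
    (μ : Measure (Eℝ k)) (ν : Measure (Eℝ m))
    [IsFiniteMeasure μ] [IsFiniteMeasure ν] (hμ : μ ≠ 0) (hν : ν ≠ 0)
    (θ : ℝ) (hθ : θ ∈ Set.Ioc (0 : ℝ) 1) :
    fSpec (k + m) (mprod μ ν) θ ≤
      min (ENNReal.ofReal ((k : ℝ) * θ) + fSpec m ν θ)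
        (fSpec k μ θ + ENNReal.ofReal ((m : ℝ) * θ)) := by
  obtain ⟨hθ0, hθ1⟩ := hθ
  rw [show fSpec (k + m) (mprod μ ν) θ
      = ⨆ s ∈ {s : ℝ | 0 ≤ s ∧ Jfin (k + m) (mprod μ ν) s θ}, ENNReal.ofReal s by
    rw [fSpec, if_neg hθ0.ne']]
  refine iSup_le fun s => iSup_le fun hs => ?_
  obtain ⟨hs0, hsJ⟩ := hs
  refine le_min ?_ ?_
  · rcases le_or_gt s ((k:ℝ)*θ) with hle | hgt
    · exact le_trans (ENNReal.ofReal_le_ofReal hle) le_self_add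
    · have hJν : Jfin m ν (s - (k:ℝ)*θ) θ :=
        key hm μ ν hμ hθ0 hgt (Jfin_transfer μ ν hsJ)
      have hmem : (s - (k:ℝ)*θ) ∈ {s : ℝ | 0 ≤ s ∧ Jfin m ν s θ} := ⟨by linarith, hJν⟩
      have hle2 : ENNReal.ofReal (s - (k:ℝ)*θ) ≤ fSpec m ν θ := by
        rw [show fSpec m ν θ = ⨆ s ∈ {s : ℝ | 0 ≤ s ∧ Jfin m ν s θ}, ENNReal.ofReal s by
          rw [fSpec, if_neg hθ0.ne']]
        exact le_iSup₂ (f := fun s' (_ : s' ∈ {s : ℝ | 0 ≤ s ∧ Jfin m ν s θ}) =>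
          ENNReal.ofReal s') _ hmem
      calc ENNReal.ofReal s = ENNReal.ofReal ((k:ℝ)*θ + (s - (k:ℝ)*θ)) := by norm_num
        _ = ENNReal.ofReal ((k:ℝ)*θ) + ENNReal.ofReal (s - (k:ℝ)*θ) :=
            ENNReal.ofReal_add (by positivity) (by linarith)
        _ ≤ _ := add_le_add_right hle2 _
  · rcases le_or_gt s ((m:ℝ)*θ) with hle | hgt
    · exact le_trans (ENNReal.ofReal_le_ofReal hle) le_add_self
    · have hJμ : Jfin k μ (s - (m:ℝ)*θ) θ :=
        key hk ν μ hν hθ0 hgt (Jfin_transfer_swap μ ν hsJ)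
      have hmem : (s - (m:ℝ)*θ) ∈ {s : ℝ | 0 ≤ s ∧ Jfin k μ s θ} := ⟨by linarith, hJμ⟩
      have hle2 : ENNReal.ofReal (s - (m:ℝ)*θ) ≤ fSpec k μ θ := by
        rw [show fSpec k μ θ = ⨆ s ∈ {s : ℝ | 0 ≤ s ∧ Jfin k μ s θ}, ENNReal.ofReal s by
          rw [fSpec, if_neg hθ0.ne']]
        exact le_iSup₂ (f := fun s' (_ : s' ∈ {s : ℝ | 0 ≤ s ∧ Jfin k μ s θ}) =>
          ENNReal.ofReal s') _ hmem
      calc ENNReal.ofReal s = ENNReal.ofReal ((s - (m:ℝ)*θ) + (m:ℝ)*θ) := by norm_num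
        _ = ENNReal.ofReal (s - (m:ℝ)*θ) + ENNReal.ofReal ((m:ℝ)*θ) :=
            ENNReal.ofReal_add (by linarith) (by positivity)
        _ ≤ _ := add_le_add_left hle2 _
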